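/- arXiv:2512.09659 — 2 statements merged into one kernel-verified Lean document; each statement's English description precedes it below -/
import Mathlib

section
/- Uniform-over-p Slutsky theorem (quotient): Let X_{n,p}, Y_{n,p}, X_p (n, p ∈ ℕ) be real-valued random variables and {c_p}_{p∈ℕ} a bounded sequence of real numbers with countable closure satisfying inf_p |c_p| > 0. Suppose the laws of {X_p}_{p∈ℕ} satisfy (A1) and (A2), X_{n,p} ⇒ X_p uniformly-over-p, and Y_{n,p} →_P c_p uniformly-over-p. Then X_{n,p} / Y_{n,p} ⇒ X_p / c_p uniformly-over-p. -/
open MeasureTheory Filter Set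
open scoped ProbabilityTheory

/-- `x` is an equi-continuity point of the family of functions `F p`. -/
def EquiContAt (F : ℕ → ℝ → ℝ) (x : ℝ) : Prop :=
  ∀ ε > (0 : ℝ), ∃ δ > (0 : ℝ), ∀ p : ℕ, ∀ y, |y - x| < δ → |F p y - F p x| < ε

section SlutskyAux

variable {Ω : Type*} [MeasureSpace Ω] [IsProbabilityMeasure (ℙ : Measure Ω)]

private lemma slutsky_integrable_comp (f : BoundedContinuousFunction ℝ ℝ) {U : Ω → ℝ}
    (hU : Measurable U) : Integrable (fun ω => f (U ω)) ℙ :=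
  ⟨(f.continuous.measurable.comp hU).aestronglyMeasurable,
    HasFiniteIntegral.of_bounded (C := ‖f‖) (ae_of_all _ fun ω => f.norm_coe_le_norm _)⟩

private lemma slutsky_union_toReal (A B : Set Ω) :
    (ℙ (A ∪ B)).toReal ≤ (ℙ A).toReal + (ℙ B).toReal := by
  rw [← ENNReal.toReal_add (measure_ne_top _ _) (measure_ne_top _ _)]
  exact ENNReal.toReal_mono (by finiteness) (measure_union_le _ _)

private lemma slutsky_toReal_mono {A B : Set Ω} (h : A ⊆ B) :
    (ℙ A).toReal ≤ (ℙ B).toReal :=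
  ENNReal.toReal_mono (measure_ne_top _ _) (measure_mono h)

/-- Key estimate: if `|f ∘ U - f ∘ V| ≤ δ` off a bad set `A`, then the integrals differ by
at most `δ + 2‖f‖ ℙ(A)`. -/
private lemma slutsky_key (f : BoundedContinuousFunction ℝ ℝ) {U V : Ω → ℝ}
    (hU : Measurable U) (hV : Measurable V) {A : Set Ω} (hA : MeasurableSet A)
    {δ : ℝ} (hδ : 0 ≤ δ) (h : ∀ ω, ω ∉ A → |f (U ω) - f (V ω)| ≤ δ) :
    |(∫ ω, f (U ω)) - ∫ ω, f (V ω)| ≤ δ + 2 * ‖f‖ * (ℙ A).toReal := by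
  rw [← integral_sub (slutsky_integrable_comp f hU) (slutsky_integrable_comp f hV)]
  have habs : |∫ ω, (f (U ω) - f (V ω))| ≤ ∫ ω, |f (U ω) - f (V ω)| := by
    simpa [Real.norm_eq_abs] using
      norm_integral_le_integral_norm (μ := (ℙ : Measure Ω)) (fun ω => f (U ω) - f (V ω))
  refine habs.trans ?_
  have hint1 : Integrable (fun ω => |f (U ω) - f (V ω)|) ℙ :=
    ((slutsky_integrable_comp f hU).sub (slutsky_integrable_comp f hV)).abs
  have hint2 : Integrable (fun ω => A.indicator (fun _ => 2 * ‖f‖) ω + δ) ℙ :=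
    ((integrable_const _).indicator hA).add (integrable_const δ)
  have hmono : ∀ ω, |f (U ω) - f (V ω)| ≤ A.indicator (fun _ => 2 * ‖f‖) ω + δ := by
    intro ω
    by_cases hω : ω ∈ A
    · have h1 := f.norm_coe_le_norm (U ω)
      have h2 := f.norm_coe_le_norm (V ω)
      rw [Real.norm_eq_abs] at h1 h2
      have h3 := abs_sub (f (U ω)) (f (V ω))
      rw [Set.indicator_of_mem hω]
      linarith
    · rw [Set.indicator_of_notMem hω]
      have := h ω hω
      linarith
  refine (integral_mono hint1 hint2 hmono).trans_eq ?_
  rw [integral_add ((integrable_const _).indicator hA) (integrable_const δ),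
    integral_indicator_const _ hA, integral_const]
  simp [smul_eq_mul]
  rw [measureReal_def]; ring

private lemma slutsky_div_bound {x a b r d l : ℝ} (hl : 0 < l) (ha : l ≤ |a|) (hb : l ≤ |b|)
    (hx : |x| ≤ r) (hd : |b - a| ≤ d) : |x / a - x / b| ≤ r * d / (l * l) := by
  have ha0 : a ≠ 0 := by
    intro h; rw [h] at ha; simp at ha; linarith
  have hb0 : b ≠ 0 := by
    intro h; rw [h] at hb; simp at hb; linarith
  have key : x / a - x / b = x * (b - a) / (a * b) := by field_simp
  rw [key, abs_div, abs_mul, abs_mul]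
  have hr0 : 0 ≤ r := (abs_nonneg x).trans hx
  have hd0 : 0 ≤ d := (abs_nonneg _).trans hd
  have h1 : |x| * |b - a| ≤ r * d := mul_le_mul hx hd (abs_nonneg _) hr0
  have h2 : l * l ≤ |a| * |b| := mul_le_mul ha hb hl.le (abs_nonneg _)
  exact div_le_div₀ (by positivity) h1 (by positivity) h2

private lemma slutsky_abs_div_le {x a r l : ℝ} (hl : 0 < l) (ha : l ≤ |a|) (hx : |x| ≤ r) :
    |x / a| ≤ r / l := by
  rw [abs_div]
  exact div_le_div₀ ((abs_nonneg x).trans hx) hx hl ha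

end SlutskyAux

/-- **Uniform-over-p Slutsky theorem (quotient).**
If `X n p ⟹ X' p` uniformly-over-`p`, `Y n p →_P c p` uniformly-over-`p`, where
`c` is a bounded real sequence with countable closure and the laws of the `X' p`
satisfy (A1) (tightness) and (A2) (co-countably many equi-continuity points of
their distribution functions), then `X n p / Y n p ⟹ X' p / c p` (assuming `inf_p |c p| > 0`)
uniformly-over-`p`. -/
theorem uniform_over_p_slutsky_div
    {Ω : Type*} [MeasureSpace Ω] [IsProbabilityMeasure (ℙ : Measure Ω)]
    (X Y : ℕ → ℕ → Ω → ℝ) (X' : ℕ → Ω → ℝ) (c : ℕ → ℝ)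
    (hXmeas : ∀ n p, Measurable (X n p)) (hYmeas : ∀ n p, Measurable (Y n p))
    (hX'meas : ∀ p, Measurable (X' p))
    (hc_bdd : ∃ M : ℝ, ∀ p, |c p| ≤ M)
    (hc_ctble : Set.Countable (closure (Set.range c)))
    (hc_pos : ∃ l > (0 : ℝ), ∀ p, l ≤ |c p|)
    (hA1 : ∀ ε > (0 : ℝ), ∃ r : ℝ, ∀ p : ℕ, (ℙ {ω | r < |X' p ω|}).toReal < ε)
    (hA2 : Set.Countable
      {x | ¬ EquiContAt (fun p x => (ℙ {ω | X' p ω ≤ x}).toReal) x})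
    (hX : ∀ f : BoundedContinuousFunction ℝ ℝ, ∀ ε > (0 : ℝ), ∃ N : ℕ, ∀ n ≥ N, ∀ p : ℕ,
      |(∫ ω, f (X n p ω)) - ∫ ω, f (X' p ω)| < ε)
    (hY : ∀ ε > (0 : ℝ), ∀ η > (0 : ℝ), ∃ N : ℕ, ∀ n ≥ N, ∀ p : ℕ,
      (ℙ {ω | ε < |Y n p ω - c p|}).toReal < η) :
    ∀ f : BoundedContinuousFunction ℝ ℝ, ∀ ε > (0 : ℝ), ∃ N : ℕ, ∀ n ≥ N, ∀ p : ℕ,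
      |(∫ ω, f (X n p ω / Y n p ω)) - ∫ ω, f (X' p ω / c p)| < ε := by
  intro f ε hε
  obtain ⟨M, hM⟩ := hc_bdd
  obtain ⟨l, hl, hlc⟩ := hc_pos
  set C : ℝ := ‖f‖ with hCdef
  have hC0 : 0 ≤ C := norm_nonneg f
  set ε' : ℝ := ε / 8 with hε'def
  have hε'pos : 0 < ε' := by rw [hε'def]; positivity
  set θ : ℝ := ε / (48 * (C + 1)) with hθdef
  have hθpos : 0 < θ := by rw [hθdef]; positivity
  -- the bound `6 C θ ≤ ε / 8`
  have hθC : 2 * C * (3 * θ) ≤ ε / 8 := by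
    have h48 : θ * (48 * (C + 1)) = ε := by
      rw [hθdef]; field_simp
    nlinarith [hθpos]
  -- tightness radius
  obtain ⟨r₀, hr₀⟩ := hA1 θ hθpos
  set r₁ : ℝ := max r₀ 0 with hr₁def
  have hr₁0 : 0 ≤ r₁ := le_max_right _ _
  set r : ℝ := r₁ + 1 with hrdef
  have hrpos : 0 < r := by rw [hrdef]; linarith
  have hX'tight : ∀ p, (ℙ {ω | r₁ < |X' p ω|}).toReal < θ := by
    intro p
    refine lt_of_le_of_lt (slutsky_toReal_mono ?_) (hr₀ p)
    intro ω hω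
    have h1 : r₀ ≤ r₁ := le_max_left _ _
    exact lt_of_le_of_lt h1 hω
  -- the cutoff function
  set g0 : BoundedContinuousFunction ℝ ℝ :=
    BoundedContinuousFunction.ofNormedAddCommGroup (fun x => min 1 (max (|x| - r₁) 0))
      (continuous_const.min ((continuous_abs.sub continuous_const).max continuous_const)) 1
      (fun x => by
        rw [Real.norm_eq_abs, abs_le]
        constructor
        · have : (0:ℝ) ≤ min 1 (max (|x| - r₁) 0) := le_min zero_le_one (le_max_right _ _)
          linarith
        · exact min_le_left _ _) with hg0def
  have hg0 : ∀ z : ℝ, g0 z = min 1 (max (|z| - r₁) 0) := fun z => rfl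
  have hind : ∀ (Z : Ω → ℝ), Measurable Z →
      (ℙ {ω | r < |Z ω|}).toReal ≤ ∫ ω, g0 (Z ω) := by
    intro Z hZ
    have hS : MeasurableSet {ω | r < |Z ω|} := measurableSet_lt measurable_const hZ.abs
    have heq : (ℙ {ω | r < |Z ω|}).toReal
        = ∫ ω, ({ω | r < |Z ω|}).indicator (fun _ => (1:ℝ)) ω := by
      rw [integral_indicator_const _ hS]; simp [measureReal_def]
    rw [heq]
    refine integral_mono ((integrable_const 1).indicator hS)
      (slutsky_integrable_comp g0 hZ) fun ω => ?_
    by_cases hω : ω ∈ {ω | r < |Z ω|}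
    · rw [Set.indicator_of_mem hω, hg0]
      have hω' : r < |Z ω| := hω
      have h1 : (1:ℝ) ≤ max (|Z ω| - r₁) 0 := by
        refine le_max_of_le_left ?_
        rw [hrdef] at hω'
        linarith
      exact le_min le_rfl h1
    · rw [Set.indicator_of_notMem hω, hg0]
      exact le_min zero_le_one (le_max_right _ _)
  have hind' : ∀ (Z : Ω → ℝ), Measurable Z →
      (∫ ω, g0 (Z ω)) ≤ (ℙ {ω | r₁ < |Z ω|}).toReal := by
    intro Z hZ
    have hS : MeasurableSet {ω | r₁ < |Z ω|} := measurableSet_lt measurable_const hZ.abs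
    have heq : (ℙ {ω | r₁ < |Z ω|}).toReal
        = ∫ ω, ({ω | r₁ < |Z ω|}).indicator (fun _ => (1:ℝ)) ω := by
      rw [integral_indicator_const _ hS]; simp [measureReal_def]
    rw [heq]
    refine integral_mono (slutsky_integrable_comp g0 hZ)
      ((integrable_const 1).indicator hS) fun ω => ?_
    by_cases hω : ω ∈ {ω | r₁ < |Z ω|}
    · rw [Set.indicator_of_mem hω, hg0]
      exact min_le_left _ _
    · rw [Set.indicator_of_notMem hω, hg0]
      have hω' : ¬ r₁ < |Z ω| := hω
      have h1 : |Z ω| - r₁ ≤ 0 := by push_neg at hω'; linarith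
      rw [max_eq_right h1]
      simp
  obtain ⟨N₀, hN₀⟩ := hX g0 θ hθpos
  have hXtight : ∀ n, N₀ ≤ n → ∀ p, (ℙ {ω | r < |X n p ω|}).toReal < 2 * θ := by
    intro n hn p
    have h1 := hind (X n p) (hXmeas n p)
    have h2 := hind' (X' p) (hX'meas p)
    have h3 := hN₀ n hn p
    have h4 := hX'tight p
    rw [abs_lt] at h3
    have h31 := h3.1
    have h32 := h3.2
    linarith
  -- uniform continuity of f on a compact interval
  set R : ℝ := 2 * r / l with hRdef
  have hReq : r / (l / 2) = R := by
    rw [hRdef]; field_simp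
  have huc := (isCompact_closedBall (0:ℝ) R).uniformContinuousOn_of_continuous
    f.continuous.continuousOn
  rw [Metric.uniformContinuousOn_iff] at huc
  obtain ⟨δ₂, hδ₂pos, hδ₂⟩ := huc ε' hε'pos
  have hf_uc : ∀ a b : ℝ, |a| ≤ R → |b| ≤ R → |a - b| < δ₂ → |f a - f b| < ε' := by
    intro a b h1 h2 h3
    have := hδ₂ a (by simpa [Real.dist_eq] using h1) b (by simpa [Real.dist_eq] using h2)
      (by simpa [Real.dist_eq] using h3)
    simpa [Real.dist_eq] using this
  -- choice of δ' and ε₀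
  set δ' : ℝ := δ₂ * l ^ 2 / (8 * r) with hδ'def
  have hδ'pos : 0 < δ' := by rw [hδ'def]; positivity
  set ε₀ : ℝ := min (l / 2) δ' with hε₀def
  have hε₀pos : 0 < ε₀ := lt_min (by linarith) hδ'pos
  have hε₀l : ε₀ ≤ l / 2 := min_le_left _ _
  have hgap : r * δ' / ((l / 2) * (l / 2)) < δ₂ := by
    have heq2 : r * δ' / ((l / 2) * (l / 2)) = δ₂ / 2 := by
      rw [hδ'def]; field_simp; ring
    rw [heq2]; linarith
  have hgapA : r * ε₀ / ((l / 2) * (l / 2)) < δ₂ := by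
    refine lt_of_le_of_lt ?_ hgap
    refine (div_le_div_iff_of_pos_right (by positivity)).mpr ?_
    exact mul_le_mul_of_nonneg_left (min_le_right _ _) hrpos.le
  -- compactness of the closure of the range of c, and a finite δ'-net
  have hKcomp : IsCompact (closure (Set.range c)) := by
    refine Metric.isCompact_of_isClosed_isBounded isClosed_closure ?_
    refine Bornology.IsBounded.closure ?_
    refine (isBounded_iff_forall_norm_le).mpr ⟨M, ?_⟩
    rintro x ⟨p, rfl⟩
    simpa [Real.norm_eq_abs] using hM p
  have hKl : ∀ x ∈ closure (Set.range c), l ≤ |x| := by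
    intro x hx
    have hsub : closure (Set.range c) ⊆ {y : ℝ | l ≤ |y|} :=
      closure_minimal (by rintro y ⟨p, rfl⟩; exact hlc p)
        (isClosed_le continuous_const continuous_abs)
    exact hsub hx
  have hcover : closure (Set.range c) ⊆
      ⋃ t : closure (Set.range c), Metric.ball (t : ℝ) δ' := by
    intro x hx
    exact Set.mem_iUnion.mpr ⟨⟨x, hx⟩, Metric.mem_ball_self hδ'pos⟩
  obtain ⟨T, hT⟩ := hKcomp.elim_finite_subcover _ (fun _ => Metric.isOpen_ball) hcover
  -- uniform convergence for the finitely many composed test functions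
  have hchoice := fun t : closure (Set.range c) =>
    hX (f.compContinuous ⟨fun x => x / (t : ℝ), continuous_id.div_const _⟩) ε' hε'pos
  choose NN hNN using hchoice
  set N₁ : ℕ := T.sup NN with hN₁def
  obtain ⟨N₂, hN₂⟩ := hY ε₀ hε₀pos θ hθpos
  refine ⟨max N₀ (max N₁ N₂), fun n hn p => ?_⟩
  have hn₀ : N₀ ≤ n := le_trans (le_max_left _ _) hn
  have hn₁ : N₁ ≤ n := le_trans (le_trans (le_max_left _ _) (le_max_right _ _)) hn
  have hn₂ : N₂ ≤ n := le_trans (le_trans (le_max_right _ _) (le_max_right _ _)) hn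
  -- pick a point of the net near c p
  have hcpK : c p ∈ closure (Set.range c) := subset_closure ⟨p, rfl⟩
  have hcpT := hT hcpK
  rw [Set.mem_iUnion₂] at hcpT
  obtain ⟨t, htT, hct⟩ := hcpT
  have hct' : |c p - (t : ℝ)| < δ' := by
    rw [Metric.mem_ball, Real.dist_eq] at hct
    exact hct
  have htl : l ≤ |(t : ℝ)| := hKl _ t.2
  have hcl : l ≤ |c p| := hlc p
  have hl2c : l / 2 ≤ |c p| := by linarith
  have hl2t : l / 2 ≤ |(t : ℝ)| := by linarith
  have hl2 : 0 < l / 2 := by linarith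
  -- the five integrals
  set I1 : ℝ := ∫ ω, f (X n p ω / Y n p ω) with hI1
  set I2 : ℝ := ∫ ω, f (X n p ω / c p) with hI2
  set I3 : ℝ := ∫ ω, f (X n p ω / (t : ℝ)) with hI3
  set I4 : ℝ := ∫ ω, f (X' p ω / (t : ℝ)) with hI4
  set I5 : ℝ := ∫ ω, f (X' p ω / c p) with hI5
  -- Step A : I1 vs I2 (Slutsky substitution)
  have hA : |I1 - I2| ≤ ε' + 2 * C * (ℙ ({ω | r < |X n p ω|} ∪
      {ω | ε₀ < |Y n p ω - c p|})).toReal := by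
    rw [hI1, hI2]
    refine slutsky_key f ((hXmeas n p).div (hYmeas n p)) ((hXmeas n p).div_const _)
      ((measurableSet_lt measurable_const (hXmeas n p).abs).union
        (measurableSet_lt measurable_const ((hYmeas n p).sub measurable_const).abs)) hε'pos.le ?_
    intro ω hω
    rw [Set.mem_union] at hω
    push_neg at hω
    have hX1 : |X n p ω| ≤ r := by
      have := hω.1; simp only [Set.mem_setOf_eq, not_lt] at this; exact this
    have hY1 : |Y n p ω - c p| ≤ ε₀ := by
      have := hω.2; simp only [Set.mem_setOf_eq, not_lt] at this; exact this
    have hYlb : l / 2 ≤ |Y n p ω| := by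
      have h1 : |c p| - |Y n p ω| ≤ |c p - Y n p ω| := abs_sub_abs_le_abs_sub _ _
      rw [abs_sub_comm] at h1
      linarith
    have hdiff : |X n p ω / Y n p ω - X n p ω / c p| ≤ r * ε₀ / ((l / 2) * (l / 2)) := by
      refine slutsky_div_bound hl2 hYlb hl2c hX1 ?_
      rw [abs_sub_comm]; exact hY1
    have hU1 : |X n p ω / Y n p ω| ≤ R := by
      rw [← hReq]; exact slutsky_abs_div_le hl2 hYlb hX1
    have hV1 : |X n p ω / c p| ≤ R := by
      rw [← hReq]; exact slutsky_abs_div_le hl2 hl2c hX1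
    exact (hf_uc _ _ hU1 hV1 (lt_of_le_of_lt hdiff hgapA)).le
  -- Step B : I2 vs I3 (replace c p by the net point t)
  have hB : |I2 - I3| ≤ ε' + 2 * C * (ℙ {ω | r < |X n p ω|}).toReal := by
    rw [hI2, hI3]
    refine slutsky_key f ((hXmeas n p).div_const _) ((hXmeas n p).div_const _)
      (measurableSet_lt measurable_const (hXmeas n p).abs) hε'pos.le ?_
    intro ω hω
    have hX1 : |X n p ω| ≤ r := by
      simp only [Set.mem_setOf_eq, not_lt] at hω; exact hω
    have hdiff : |X n p ω / c p - X n p ω / (t : ℝ)| ≤ r * δ' / ((l / 2) * (l / 2)) := by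
      refine slutsky_div_bound hl2 hl2c hl2t hX1 ?_
      rw [abs_sub_comm]; exact hct'.le
    have hU1 : |X n p ω / c p| ≤ R := by
      rw [← hReq]; exact slutsky_abs_div_le hl2 hl2c hX1
    have hV1 : |X n p ω / (t : ℝ)| ≤ R := by
      rw [← hReq]; exact slutsky_abs_div_le hl2 hl2t hX1
    exact (hf_uc _ _ hU1 hV1 (lt_of_le_of_lt hdiff hgap)).le
  -- Step C : I3 vs I4 (uniform weak convergence, applied to the composed function)
  have hCc : |I3 - I4| < ε' := by
    have h1 : NN t ≤ n := le_trans (le_trans (Finset.le_sup htT) (le_of_eq hN₁def.symm)) hn₁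
    exact hNN t n h1 p
  -- Step D : I4 vs I5 (replace t back by c p, for the limit variables)
  have hD : |I4 - I5| ≤ ε' + 2 * C * (ℙ {ω | r < |X' p ω|}).toReal := by
    rw [hI4, hI5]
    refine slutsky_key f ((hX'meas p).div_const _) ((hX'meas p).div_const _)
      (measurableSet_lt measurable_const (hX'meas p).abs) hε'pos.le ?_
    intro ω hω
    have hX1 : |X' p ω| ≤ r := by
      simp only [Set.mem_setOf_eq, not_lt] at hω; exact hω
    have hdiff : |X' p ω / (t : ℝ) - X' p ω / c p| ≤ r * δ' / ((l / 2) * (l / 2)) :=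
      slutsky_div_bound hl2 hl2t hl2c hX1 hct'.le
    have hU1 : |X' p ω / (t : ℝ)| ≤ R := by
      rw [← hReq]; exact slutsky_abs_div_le hl2 hl2t hX1
    have hV1 : |X' p ω / c p| ≤ R := by
      rw [← hReq]; exact slutsky_abs_div_le hl2 hl2c hX1
    exact (hf_uc _ _ hU1 hV1 (lt_of_le_of_lt hdiff hgap)).le
  -- probability bounds
  have hPA : (ℙ ({ω | r < |X n p ω|} ∪ {ω | ε₀ < |Y n p ω - c p|})).toReal < 3 * θ := by
    refine lt_of_le_of_lt (slutsky_union_toReal _ _) ?_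
    have h1 := hXtight n hn₀ p
    have h2 := hN₂ n hn₂ p
    linarith
  have hPB : (ℙ {ω | r < |X n p ω|}).toReal < 3 * θ := by
    have := hXtight n hn₀ p; linarith
  have hPD : (ℙ {ω | r < |X' p ω|}).toReal < 3 * θ := by
    have h1 : (ℙ {ω | r < |X' p ω|}).toReal ≤ (ℙ {ω | r₁ < |X' p ω|}).toReal := by
      refine slutsky_toReal_mono ?_
      intro ω hω
      have : r₁ < r := by rw [hrdef]; linarith
      exact lt_trans this hω
    have h2 := hX'tight p
    linarith [hθpos]
  -- combine
  have hmul : ∀ P : ℝ, P < 3 * θ → 0 ≤ P → 2 * C * P ≤ ε / 8 := by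
    intro P h1 h2
    have h3 : 2 * C * P ≤ 2 * C * (3 * θ) :=
      mul_le_mul_of_nonneg_left h1.le (by positivity)
    linarith
  have hA' : |I1 - I2| ≤ ε' + ε / 8 :=
    hA.trans (by linarith [hmul _ hPA ENNReal.toReal_nonneg])
  have hB' : |I2 - I3| ≤ ε' + ε / 8 :=
    hB.trans (by linarith [hmul _ hPB ENNReal.toReal_nonneg])
  have hD' : |I4 - I5| ≤ ε' + ε / 8 :=
    hD.trans (by linarith [hmul _ hPD ENNReal.toReal_nonneg])
  have htri : |I1 - I5| ≤ |I1 - I2| + |I2 - I3| + |I3 - I4| + |I4 - I5| := by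
    have t1 := abs_sub_le I1 I2 I5
    have t2 := abs_sub_le I2 I3 I5
    have t3 := abs_sub_le I3 I4 I5
    linarith
  have hfin : |I1 - I5| < ε := by
    have hε'val : ε' = ε / 8 := hε'def
    linarith
  exact hfin
end

section
/- Uniform-over-p convergence of quantiles: Let {F_{n,p}}_{n,p∈ℕ} be a family of distribution functions on ℝ, and let {F_p}_{p∈ℕ} and F be continuous distribution functions with F_p converging weakly to F as p → ∞, and suppose F_{n,p} ⇒ F_p uniformly-over-p. Let Q_{n,p}, Q_p, Q denote the quantile functions of F_{n,p}, F_p, F. Fix α ∈ (0,1) and assume that for every ε > 0 and every p ∈ ℕ, F_p(Q_p(α)) < F_p(Q_p(α) + ε) and F(Q(α)) < F(Q(α) + ε). Then lim_{n→∞} sup_{p∈ℕ} |Q_{n,p}(α) − Q_p(α)| = 0. -/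
open MeasureTheory Filter Set Topology

/-- Distribution function of a measure on `ℝ`. -/
noncomputable def cdfR (μ : Measure ℝ) (x : ℝ) : ℝ := (μ (Iic x)).toReal

/-- Quantile function of a distribution function `G` at level `a`. -/
noncomputable def quantileFn (G : ℝ → ℝ) (a : ℝ) : ℝ := sInf {x | a ≤ G x}

lemma cdfR_eq_cdf (μ : Measure ℝ) [IsProbabilityMeasure μ] (x : ℝ) :
    cdfR μ x = ProbabilityTheory.cdf μ x := (ProbabilityTheory.cdf_eq_real μ x).symm

lemma cdfR_mono (μ : Measure ℝ) [IsProbabilityMeasure μ] : Monotone (cdfR μ) := by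
  intro x y h
  simp only [cdfR_eq_cdf]
  exact ProbabilityTheory.monotone_cdf μ h

lemma qset_nonempty (μ : Measure ℝ) [IsProbabilityMeasure μ] {α : ℝ} (hα : α < 1) :
    {x | α ≤ cdfR μ x}.Nonempty := by
  have h := ProbabilityTheory.tendsto_cdf_atTop μ
  have : ∀ᶠ x in atTop, α < ProbabilityTheory.cdf μ x :=
    h.eventually (eventually_gt_nhds hα)
  obtain ⟨x, hx⟩ := this.exists
  exact ⟨x, by rw [mem_setOf_eq, cdfR_eq_cdf]; exact hx.le⟩

lemma qset_bddBelow (μ : Measure ℝ) [IsProbabilityMeasure μ] {α : ℝ} (hα : 0 < α) :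
    BddBelow {x | α ≤ cdfR μ x} := by
  have h := ProbabilityTheory.tendsto_cdf_atBot μ
  have : ∀ᶠ x in atBot, ProbabilityTheory.cdf μ x < α :=
    h.eventually (eventually_lt_nhds hα)
  obtain ⟨x0, hx0⟩ := this.exists
  refine ⟨x0, fun y hy => ?_⟩
  by_contra hlt
  push_neg at hlt
  have hy' : α ≤ cdfR μ y := hy
  have : cdfR μ y ≤ cdfR μ x0 := cdfR_mono μ hlt.le
  rw [← cdfR_eq_cdf] at hx0
  exact absurd (hy'.trans this) (not_le.mpr hx0)

lemma quantile_le (μ : Measure ℝ) [IsProbabilityMeasure μ] {α x : ℝ} (hα : 0 < α)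
    (hx : α ≤ cdfR μ x) : quantileFn (cdfR μ) α ≤ x :=
  csInf_le (qset_bddBelow μ hα) hx

lemma le_quantile (μ : Measure ℝ) [IsProbabilityMeasure μ] {α x : ℝ} (hα1 : α < 1)
    (hx : cdfR μ x < α) : x ≤ quantileFn (cdfR μ) α := by
  refine le_csInf (qset_nonempty μ hα1) (fun y hy => ?_)
  by_contra hlt
  push_neg at hlt
  have hy' : α ≤ cdfR μ y := hy
  exact absurd (hy'.trans (cdfR_mono μ hlt.le)) (not_le.mpr hx)

lemma cdfR_lt_of_lt_quantile (μ : Measure ℝ) [IsProbabilityMeasure μ] {α x : ℝ} (hα : 0 < α)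
    (hx : x < quantileFn (cdfR μ) α) : cdfR μ x < α := by
  by_contra h
  push_neg at h
  exact absurd (quantile_le μ hα h) (not_le.mpr hx)

lemma le_cdfR_quantile (μ : Measure ℝ) [IsProbabilityMeasure μ] {α : ℝ}
    (hα : 0 < α) (hα1 : α < 1) (hc : Continuous (cdfR μ)) :
    α ≤ cdfR μ (quantileFn (cdfR μ) α) := by
  have hcl : IsClosed {x | α ≤ cdfR μ x} := isClosed_le continuous_const hc
  exact hcl.csInf_mem (qset_nonempty μ hα1) (qset_bddBelow μ hα)

noncomputable def bumpFn (t h : ℝ) : BoundedContinuousFunction ℝ ℝ :=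
  BoundedContinuousFunction.ofNormedAddCommGroup
    (fun x => max 0 (min 1 ((t + h - x) / h)))
    (by fun_prop) 1
    (fun x => by
      rw [Real.norm_eq_abs, abs_le]
      constructor
      · linarith [le_max_left (0:ℝ) (min 1 ((t + h - x) / h))]
      · exact max_le zero_le_one (min_le_left _ _))

lemma bumpFn_apply (t h x : ℝ) : bumpFn t h x = max 0 (min 1 ((t + h - x) / h)) := rfl

lemma bumpFn_one {t h x : ℝ} (hh : 0 < h) (hx : x ≤ t) : bumpFn t h x = 1 := by
  rw [bumpFn_apply]
  have h1 : (1:ℝ) ≤ (t + h - x) / h := (le_div_iff₀ hh).mpr (by linarith)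
  rw [min_eq_left h1]
  simp

lemma bumpFn_zero {t h x : ℝ} (hh : 0 < h) (hx : t + h ≤ x) : bumpFn t h x = 0 := by
  rw [bumpFn_apply]
  have h1 : (t + h - x) / h ≤ 0 := div_nonpos_of_nonpos_of_nonneg (by linarith) hh.le
  rw [min_eq_right (h1.trans zero_le_one), max_eq_left h1]

lemma bumpFn_nonneg (t h x : ℝ) : 0 ≤ bumpFn t h x := le_max_left _ _

lemma bumpFn_le_one (t h x : ℝ) : bumpFn t h x ≤ 1 :=
  max_le zero_le_one (min_le_left _ _)

lemma cdfR_le_integral_bumpFn (μ : Measure ℝ) [IsProbabilityMeasure μ] {t h : ℝ} (hh : 0 < h) :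
    cdfR μ t ≤ ∫ x, bumpFn t h x ∂μ := by
  have hind : Integrable ((Iic t).indicator (fun _ => (1:ℝ))) μ :=
    (integrable_const 1).indicator measurableSet_Iic
  have hint : Integrable (fun x => bumpFn t h x) μ := (bumpFn t h).integrable μ
  have hmono : ∀ x, (Iic t).indicator (fun _ => (1:ℝ)) x ≤ bumpFn t h x := by
    intro x
    by_cases hx : x ∈ Iic t
    · rw [indicator_of_mem hx, bumpFn_one hh hx]
    · rw [indicator_of_notMem hx]
      exact bumpFn_nonneg _ _ _
  calc cdfR μ t = ∫ x, (Iic t).indicator (fun _ => (1:ℝ)) x ∂μ := by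
        rw [integral_indicator_const (1:ℝ) measurableSet_Iic, smul_eq_mul, mul_one]; rfl
    _ ≤ ∫ x, bumpFn t h x ∂μ := integral_mono hind hint hmono

lemma integral_bumpFn_le_cdfR (μ : Measure ℝ) [IsProbabilityMeasure μ] {t h : ℝ} (hh : 0 < h) :
    ∫ x, bumpFn t h x ∂μ ≤ cdfR μ (t + h) := by
  have hind : Integrable ((Iic (t+h)).indicator (fun _ => (1:ℝ))) μ :=
    (integrable_const 1).indicator measurableSet_Iic
  have hint : Integrable (fun x => bumpFn t h x) μ := (bumpFn t h).integrable μ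
  have hmono : ∀ x, bumpFn t h x ≤ (Iic (t+h)).indicator (fun _ => (1:ℝ)) x := by
    intro x
    by_cases hx : x ∈ Iic (t+h)
    · rw [indicator_of_mem hx]
      exact bumpFn_le_one _ _ _
    · rw [indicator_of_notMem hx, bumpFn_zero hh (le_of_not_ge hx)]
  calc ∫ x, bumpFn t h x ∂μ ≤ ∫ x, (Iic (t+h)).indicator (fun _ => (1:ℝ)) x ∂μ :=
        integral_mono hint hind hmono
    _ = cdfR μ (t + h) := by
        rw [integral_indicator_const (1:ℝ) measurableSet_Iic, smul_eq_mul, mul_one]; rfl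

lemma quantile_le_of_close (μ' ν' : Measure ℝ) [IsProbabilityMeasure μ'] [IsProbabilityMeasure ν']
    {α δ t h : ℝ} (hα0 : 0 < α) (hδ : 0 < δ) (hh : 0 < h)
    (hgap : α + δ ≤ cdfR ν' t)
    (hclose : |(∫ x, bumpFn t h x ∂μ') - ∫ x, bumpFn t h x ∂ν'| < δ / 2) :
    quantileFn (cdfR μ') α ≤ t + h := by
  have h1 : cdfR ν' t ≤ ∫ x, bumpFn t h x ∂ν' := cdfR_le_integral_bumpFn ν' hh
  have h2 : ∫ x, bumpFn t h x ∂μ' ≤ cdfR μ' (t + h) := integral_bumpFn_le_cdfR μ' hh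
  have h3 := (abs_lt.mp hclose).1
  exact quantile_le μ' hα0 (by linarith)

lemma le_quantile_of_close (μ' ν' : Measure ℝ) [IsProbabilityMeasure μ'] [IsProbabilityMeasure ν']
    {α δ t h : ℝ} (hα1 : α < 1) (hδ : 0 < δ) (hh : 0 < h)
    (hgap : cdfR ν' (t + h) ≤ α - δ)
    (hclose : |(∫ x, bumpFn t h x ∂μ') - ∫ x, bumpFn t h x ∂ν'| < δ / 2) :
    t ≤ quantileFn (cdfR μ') α := by
  have h1 : ∫ x, bumpFn t h x ∂ν' ≤ cdfR ν' (t + h) := integral_bumpFn_le_cdfR ν' hh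
  have h2 : cdfR μ' t ≤ ∫ x, bumpFn t h x ∂μ' := cdfR_le_integral_bumpFn μ' hh
  have h3 := (abs_lt.mp hclose).2
  exact le_quantile μ' hα1 (by linarith)

/-- **Uniform-over-p convergence of quantiles.** Suppose the continuous
distribution functions `F p` of `ν p` converge pointwise to a continuous
distribution function `F` of `νlim`, and `μ n p ⟹ ν p` uniformly-over-`p`.
Fix `α ∈ (0,1)` and assume `F_p(Q_p(α)) < F_p(Q_p(α)+ε)` and
`F(Q(α)) < F(Q(α)+ε)` for all `ε > 0` and `p`. Then
`sup_p |Q_{n,p}(α) − Q_p(α)| → 0` as `n → ∞`. -/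
theorem uniform_over_p_quantile_convergence
    (μ : ℕ → ℕ → Measure ℝ) (ν : ℕ → Measure ℝ) (νlim : Measure ℝ)
    [∀ n p, IsProbabilityMeasure (μ n p)] [∀ p, IsProbabilityMeasure (ν p)]
    [IsProbabilityMeasure νlim]
    (hcont : ∀ p, Continuous (cdfR (ν p))) (hcontlim : Continuous (cdfR νlim))
    (hweak : ∀ x, Tendsto (fun p => cdfR (ν p) x) atTop (𝓝 (cdfR νlim x)))
    (hconv : ∀ f : BoundedContinuousFunction ℝ ℝ, ∀ ε > (0 : ℝ), ∃ N : ℕ, ∀ n ≥ N, ∀ p : ℕ,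
      |(∫ x, f x ∂(μ n p)) - ∫ x, f x ∂(ν p)| < ε)
    (α : ℝ) (hα : α ∈ Set.Ioo (0 : ℝ) 1)
    (hstrict : ∀ p : ℕ, ∀ ε > (0 : ℝ),
      cdfR (ν p) (quantileFn (cdfR (ν p)) α) <
        cdfR (ν p) (quantileFn (cdfR (ν p)) α + ε))
    (hstrictlim : ∀ ε > (0 : ℝ),
      cdfR νlim (quantileFn (cdfR νlim) α) <
        cdfR νlim (quantileFn (cdfR νlim) α + ε)) :
    ∀ ε > (0 : ℝ), ∃ N : ℕ, ∀ n ≥ N, ∀ p : ℕ,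
      |quantileFn (cdfR (μ n p)) α - quantileFn (cdfR (ν p)) α| < ε := by
  obtain ⟨hα0, hα1⟩ := hα
  intro ε hε
  set Q : ℝ := quantileFn (cdfR νlim) α with hQdef
  set Qp : ℕ → ℝ := fun p => quantileFn (cdfR (ν p)) α with hQpdef
  have h24 : (0:ℝ) < ε / 24 := by linarith
  have hFQ : α ≤ cdfR νlim Q := le_cdfR_quantile νlim hα0 hα1 hcontlim
  -- limit facts
  have hup : α < cdfR νlim (Q + ε / 24) := lt_of_le_of_lt hFQ (hstrictlim (ε / 24) h24)
  have hdn : cdfR νlim (Q - ε / 24) < α :=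
    cdfR_lt_of_lt_quantile νlim hα0 (by linarith)
  have hgu : α < cdfR νlim (Q + ε / 4) := lt_of_le_of_lt hFQ (hstrictlim (ε / 4) (by linarith))
  have hgd : cdfR νlim (Q - ε / 4) < α :=
    cdfR_lt_of_lt_quantile νlim hα0 (by linarith)
  set gu : ℝ := cdfR νlim (Q + ε / 4) - α with hgudef
  set gd : ℝ := α - cdfR νlim (Q - ε / 4) with hgddef
  have hgu0 : 0 < gu := by simp only [hgudef]; linarith
  have hgd0 : 0 < gd := by simp only [hgddef]; linarith
  have ev1 : ∀ᶠ p in atTop, α < cdfR (ν p) (Q + ε / 24) :=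
    (hweak _).eventually (eventually_gt_nhds hup)
  have ev2 : ∀ᶠ p in atTop, cdfR (ν p) (Q - ε / 24) < α :=
    (hweak _).eventually (eventually_lt_nhds hdn)
  have ev3 : ∀ᶠ p in atTop, α + gu / 2 < cdfR (ν p) (Q + ε / 4) :=
    (hweak _).eventually (eventually_gt_nhds (by simp only [hgudef]; linarith))
  have ev4 : ∀ᶠ p in atTop, cdfR (ν p) (Q - ε / 4) < α - gd / 2 :=
    (hweak _).eventually (eventually_lt_nhds (by simp only [hgddef]; linarith))
  obtain ⟨P0, hP0⟩ := eventually_atTop.mp ((ev1.and ev2).and (ev3.and ev4))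
  have hQple : ∀ p ≥ P0, Qp p ≤ Q + ε / 24 := fun p hp =>
    quantile_le (ν p) hα0 ((hP0 p hp).1.1.le)
  have hQpge : ∀ p ≥ P0, Q - ε / 24 ≤ Qp p := fun p hp =>
    le_quantile (ν p) hα1 (hP0 p hp).1.2
  set g : ℕ → ℝ := fun p =>
    min (cdfR (ν p) (Qp p + ε / 3) - α) (α - cdfR (ν p) (Qp p - ε / 3)) with hgdef
  have hg0 : ∀ p, 0 < g p := by
    intro p
    have h1 : α ≤ cdfR (ν p) (Qp p) := le_cdfR_quantile (ν p) hα0 hα1 (hcont p)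
    have h2 := hstrict p (ε / 3) (by linarith)
    have h3 : cdfR (ν p) (Qp p - ε / 3) < α :=
      cdfR_lt_of_lt_quantile (ν p) hα0 (by linarith)
    exact lt_min (by simp only [hQpdef] at h1 h2 ⊢; linarith) (by linarith)
  set δ : ℝ := min (min (gu / 2) (gd / 2))
      ((Finset.range (P0 + 1)).inf' (Finset.nonempty_range_iff.mpr (Nat.succ_ne_zero _)) g)
    with hδdef
  have hδ0 : 0 < δ := by
    apply lt_min (lt_min (by linarith) (by linarith))
    rw [Finset.lt_inf'_iff]
    exact fun p _ => hg0 p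
  have hδle : ∀ p < P0, δ ≤ g p := fun p hp =>
    (min_le_right _ _).trans (Finset.inf'_le g (Finset.mem_range.mpr (by omega)))
  have hkey1 : ∀ p, α + δ ≤ cdfR (ν p) (Qp p + ε / 3) := by
    intro p
    rcases lt_or_ge p P0 with hp | hp
    · have h := (hδle p hp).trans (min_le_left _ _)
      linarith
    · have h1 := (hP0 p hp).2.1
      have h2 : cdfR (ν p) (Q + ε / 4) ≤ cdfR (ν p) (Qp p + ε / 3) :=
        cdfR_mono (ν p) (by have := hQpge p hp; linarith)
      have hδgu : δ ≤ gu / 2 := (min_le_left _ _).trans (min_le_left _ _)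
      simp only [hgudef] at hδgu
      linarith
  have hkey2 : ∀ p, cdfR (ν p) (Qp p - ε / 3) ≤ α - δ := by
    intro p
    rcases lt_or_ge p P0 with hp | hp
    · have h := (hδle p hp).trans (min_le_right _ _)
      linarith
    · have h1 := (hP0 p hp).2.2
      have h2 : cdfR (ν p) (Qp p - ε / 3) ≤ cdfR (ν p) (Q - ε / 4) :=
        cdfR_mono (ν p) (by have := hQple p hp; linarith)
      have hδgd : δ ≤ gd / 2 := (min_le_left _ _).trans (min_le_right _ _)
      simp only [hgddef] at hδgd
      linarith
  have hδ2 : (0:ℝ) < δ / 2 := by linarith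
  obtain ⟨N1, hN1⟩ := hconv (bumpFn (Q + ε / 3 + ε / 24) (ε / 24)) (δ / 2) hδ2
  obtain ⟨N2, hN2⟩ := hconv (bumpFn (Q - ε / 3 - ε / 12) (ε / 24)) (δ / 2) hδ2
  refine ⟨max (max N1 N2) ((Finset.range P0).sup (fun p =>
      max (hconv (bumpFn (Qp p + ε / 3) (ε / 24)) (δ / 2) hδ2).choose
        (hconv (bumpFn (Qp p - ε / 3 - ε / 24) (ε / 24)) (δ / 2) hδ2).choose)),
    fun n hn p => ?_⟩
  rcases lt_or_ge p P0 with hp | hp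
  · have hsup := Finset.le_sup (f := fun p =>
      max (hconv (bumpFn (Qp p + ε / 3) (ε / 24)) (δ / 2) hδ2).choose
        (hconv (bumpFn (Qp p - ε / 3 - ε / 24) (ε / 24)) (δ / 2) hδ2).choose)
      (Finset.mem_range.mpr hp)
    have hS : (Finset.range P0).sup _ ≤ n := le_trans (le_max_right (max N1 N2) _) hn
    have hnu : (hconv (bumpFn (Qp p + ε / 3) (ε / 24)) (δ / 2) hδ2).choose ≤ n :=
      le_trans (le_trans (le_max_left _ _) hsup) hS
    have hnd : (hconv (bumpFn (Qp p - ε / 3 - ε / 24) (ε / 24)) (δ / 2) hδ2).choose ≤ n :=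
      le_trans (le_trans (le_max_right _ _) hsup) hS
    have hcu := (hconv (bumpFn (Qp p + ε / 3) (ε / 24)) (δ / 2) hδ2).choose_spec n hnu p
    have hcd := (hconv (bumpFn (Qp p - ε / 3 - ε / 24) (ε / 24)) (δ / 2) hδ2).choose_spec n hnd p
    have hub : quantileFn (cdfR (μ n p)) α ≤ Qp p + ε / 3 + ε / 24 :=
      quantile_le_of_close (μ n p) (ν p) hα0 hδ0 h24 (hkey1 p) hcu
    have hgap2 : cdfR (ν p) (Qp p - ε / 3 - ε / 24 + ε / 24) ≤ α - δ :=
      (cdfR_mono (ν p) (by linarith)).trans (hkey2 p)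
    have hlb : Qp p - ε / 3 - ε / 24 ≤ quantileFn (cdfR (μ n p)) α :=
      le_quantile_of_close (μ n p) (ν p) hα1 hδ0 h24 hgap2 hcd
    rw [abs_lt]
    constructor <;> [skip; skip] <;> simp only [hQpdef] at hub hlb ⊢ <;> linarith
  · have hn1 : N1 ≤ n := le_trans (le_trans (le_max_left _ _) (le_max_left _ _)) hn
    have hn2 : N2 ≤ n := le_trans (le_trans (le_max_right _ _) (le_max_left _ _)) hn
    have hcu := hN1 n hn1 p
    have hcd := hN2 n hn2 p
    have hple := hQple p hp
    have hpge := hQpge p hp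
    have hgap1 : α + δ ≤ cdfR (ν p) (Q + ε / 3 + ε / 24) :=
      (hkey1 p).trans (cdfR_mono (ν p) (by linarith))
    have hub : quantileFn (cdfR (μ n p)) α ≤ Q + ε / 3 + ε / 24 + ε / 24 :=
      quantile_le_of_close (μ n p) (ν p) hα0 hδ0 h24 hgap1 hcu
    have hgap2 : cdfR (ν p) (Q - ε / 3 - ε / 12 + ε / 24) ≤ α - δ :=
      (cdfR_mono (ν p) (by linarith)).trans (hkey2 p)
    have hlb : Q - ε / 3 - ε / 12 ≤ quantileFn (cdfR (μ n p)) α :=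
      le_quantile_of_close (μ n p) (ν p) hα1 hδ0 h24 hgap2 hcd
    rw [abs_lt]
    constructor <;> [skip; skip] <;> simp only [hQpdef] at hub hlb hple hpge ⊢ <;> linarith
end
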